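/- arXiv:1705.06187 — 6 statements merged into one kernel-verified Lean document; each statement's English description precedes it below -/
import Mathlib

section
/- Second spherical cosine rule: for a spherical triangle with angles α, β, γ and side lengths a, b, c, cos a = (cos α + cos β cos γ)/(sin β sin γ), and moreover cos a = 1 + 2 sin ε sin(ε − α)/(sin β sin γ), where 2ε = α + β + γ − π is the excess. -/
noncomputable section

/-- Euclidean dot product on `ℝ³`. -/
def dot3 (p q : Fin 3 → ℝ) : ℝ := p 0 * q 0 + p 1 * q 1 + p 2 * q 2

/-- Cross product on `ℝ³`. -/
def cross3 (p q : Fin 3 → ℝ) : Fin 3 → ℝ :=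
  ![p 1 * q 2 - p 2 * q 1, p 2 * q 0 - p 0 * q 2, p 0 * q 1 - p 1 * q 0]

/-- Euclidean norm on `ℝ³`. -/
def norm3 (p : Fin 3 → ℝ) : ℝ := Real.sqrt (dot3 p p)

/-- Determinant of three vectors in `ℝ³` (rows). -/
def det3 (u v w : Fin 3 → ℝ) : ℝ := dot3 u (cross3 v w)

/-- The `∗`-inner product of barycentric coordinate triples, given the cosines
`ca, cb, cc` of the side lengths (the Gram-matrix inner product). -/
def star3 (ca cb cc : ℝ) (p q : Fin 3 → ℝ) : ℝ :=
  p 0 * q 0 + p 1 * q 1 + p 2 * q 2 + (p 1 * q 2 + p 2 * q 1) * ca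
    + (p 2 * q 0 + p 0 * q 2) * cb + (p 0 * q 1 + p 1 * q 0) * cc

/-!
By Lagrange's identity the angle formulas become the first cosine rule
`cos α = (cos a - cos b cos c) / (sin b sin c)`, and `det (A, B, C) ^ 2` is the Gram
determinant `Δ = 1 - cos² a - cos² b - cos² c + 2 cos a cos b cos c`, which is therefore positive.
Then `sin α = √Δ / (sin b sin c)` and similarly for `β`, `γ`, so that `sin β sin γ` and
`cos α + cos β cos γ` are `Δ / (sin² a sin b sin c)` and `cos a` times it. The second form is
the sum-to-product formula for `cos α + cos (β + γ)`.
-/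

open Real Set

lemma dot3_comm (p q : Fin 3 → ℝ) : dot3 p q = dot3 q p := by
  unfold dot3; ring

lemma dot3_self_nonneg (p : Fin 3 → ℝ) : 0 ≤ dot3 p p := by
  unfold dot3; nlinarith [mul_self_nonneg (p 0), mul_self_nonneg (p 1), mul_self_nonneg (p 2)]

lemma dot3_self_eq_one_of_norm3_eq_one {p : Fin 3 → ℝ} (hp : norm3 p = 1) : dot3 p p = 1 := by
  rw [← sq_sqrt (dot3_self_nonneg p)]
  exact (congrArg (· ^ 2) hp).trans (one_pow 2)

/-- Binet–Cauchy identity; for `p = r`, `q = s` it is Lagrange's identity. -/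
lemma dot3_cross3_cross3 (p q r s : Fin 3 → ℝ) :
    dot3 (cross3 p q) (cross3 r s) = dot3 p r * dot3 q s - dot3 p s * dot3 q r := by
  simp only [dot3, cross3, Matrix.cons_val_zero, Matrix.cons_val_one, Matrix.cons_val_two,
    Matrix.head_cons, Matrix.tail_cons]
  ring

lemma det3_sq (p q r : Fin 3 → ℝ) :
    det3 p q r ^ 2 = dot3 p p * dot3 q q * dot3 r r + 2 * dot3 p q * dot3 q r * dot3 r p
      - dot3 p p * dot3 q r ^ 2 - dot3 q q * dot3 r p ^ 2 - dot3 r r * dot3 p q ^ 2 := by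
  simp only [det3, dot3, cross3, Matrix.cons_val_zero, Matrix.cons_val_one, Matrix.cons_val_two,
    Matrix.head_cons, Matrix.tail_cons]
  ring

lemma dot3_sq_le (u v : Fin 3 → ℝ) : dot3 u v ^ 2 ≤ dot3 u u * dot3 v v := by
  have h := dot3_self_nonneg (cross3 u v)
  rw [dot3_cross3_cross3, dot3_comm v u] at h
  linarith

lemma cos_arccos_dot3_div (u v : Fin 3 → ℝ) :
    cos (arccos (dot3 u v / (norm3 u * norm3 v))) = dot3 u v / (norm3 u * norm3 v) := by
  have hsq : (norm3 u * norm3 v) ^ 2 = dot3 u u * dot3 v v := by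
    rw [mul_pow, norm3, norm3, sq_sqrt (dot3_self_nonneg u), sq_sqrt (dot3_self_nonneg v)]
  have h : |dot3 u v / (norm3 u * norm3 v)| ≤ 1 := by
    rw [← sq_le_one_iff_abs_le_one, div_pow, hsq]
    exact div_le_one_of_le₀ (dot3_sq_le u v)
      (mul_nonneg (dot3_self_nonneg u) (dot3_self_nonneg v))
  exact cos_arccos (neg_le_of_abs_le h) (le_of_abs_le h)

section UnitVectors

variable {p q r : Fin 3 → ℝ}

lemma cos_arccos_dot3 (hp : norm3 p = 1) (hq : norm3 q = 1) :
    cos (arccos (dot3 p q)) = dot3 p q := by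
  simpa [hp, hq] using cos_arccos_dot3_div p q

lemma norm3_cross3 (hp : norm3 p = 1) (hq : norm3 q = 1) :
    norm3 (cross3 p q) = sin (arccos (dot3 p q)) := by
  rw [sin_arccos, norm3, dot3_cross3_cross3, dot3_self_eq_one_of_norm3_eq_one hp,
    dot3_self_eq_one_of_norm3_eq_one hq, dot3_comm q p]
  ring_nf

/-- The first cosine rule at the vertex `p` of the spherical triangle `p q r`. -/
lemma cos_angle_eq (hp : norm3 p = 1) (hq : norm3 q = 1) (hr : norm3 r = 1) :
    cos (arccos (dot3 (cross3 p q) (cross3 p r) / (norm3 (cross3 p q) * norm3 (cross3 p r)))) =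
      (cos (arccos (dot3 q r)) - cos (arccos (dot3 p q)) * cos (arccos (dot3 r p))) /
        (sin (arccos (dot3 p q)) * sin (arccos (dot3 r p))) := by
  rw [cos_arccos_dot3_div, dot3_cross3_cross3, norm3_cross3 hp hq, norm3_cross3 hp hr,
    cos_arccos_dot3 hq hr, cos_arccos_dot3 hp hq, cos_arccos_dot3 hr hp,
    dot3_self_eq_one_of_norm3_eq_one hp, dot3_comm p r, dot3_comm q p]
  ring_nf

end UnitVectors

/-- The Gram determinant of three unit vectors at mutual angles `a`, `b`, `c`. -/
def gramDet (a b c : ℝ) : ℝ :=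
  1 - cos a ^ 2 - cos b ^ 2 - cos c ^ 2 + 2 * cos a * cos b * cos c

lemma gramDet_rotate (a b c : ℝ) : gramDet a b c = gramDet b c a := by
  unfold gramDet; ring

lemma gramDet_eq_sin_sq_mul_sin_sq_sub (a b c : ℝ) :
    gramDet a b c = sin c ^ 2 * sin b ^ 2 - (cos a - cos c * cos b) ^ 2 := by
  rw [gramDet, sin_sq, sin_sq]; ring

lemma gramDet_arccos_dot3 {p q r : Fin 3 → ℝ} (hp : norm3 p = 1) (hq : norm3 q = 1)
    (hr : norm3 r = 1) :
    gramDet (arccos (dot3 q r)) (arccos (dot3 r p)) (arccos (dot3 p q)) = det3 p q r ^ 2 := by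
  rw [gramDet, cos_arccos_dot3 hq hr, cos_arccos_dot3 hr hp, cos_arccos_dot3 hp hq, det3_sq,
    dot3_self_eq_one_of_norm3_eq_one hp, dot3_self_eq_one_of_norm3_eq_one hq,
    dot3_self_eq_one_of_norm3_eq_one hr]
  ring

section SphericalTrigonometry

variable {a b c α β γ : ℝ}

lemma sin_pos_of_gramDet_pos (hb : b ∈ Icc 0 π) (h : 0 < gramDet a b c) : 0 < sin b := by
  refine (sin_nonneg_of_nonneg_of_le_pi hb.1 hb.2).lt_of_ne' fun hsb => ?_
  rw [gramDet_eq_sin_sq_mul_sin_sq_sub, hsb] at h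
  nlinarith [sq_nonneg (cos a - cos c * cos b)]

/-- The sine rule: `sin α / sin a = √Δ / (sin a sin b sin c)` is symmetric in the vertices. -/
lemma sin_eq_of_first_cosine_rule (hα : α ∈ Icc 0 π) (hb : 0 < sin b) (hc : 0 < sin c)
    (h : cos α = (cos a - cos c * cos b) / (sin c * sin b)) :
    sin α = √(gramDet a b c) / (sin c * sin b) := by
  have hsq : 1 - cos α ^ 2 = gramDet a b c / (sin c * sin b) ^ 2 := by
    rw [h, gramDet_eq_sin_sq_mul_sin_sq_sub]; field_simp
  rw [sin_eq_sqrt_one_sub_cos_sq hα.1 hα.2, hsq, sqrt_div' _ (sq_nonneg _),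
    sqrt_sq (by positivity)]

lemma sin_pos_of_first_cosine_rule (hα : α ∈ Icc 0 π) (hb : 0 < sin b) (hc : 0 < sin c)
    (hΔ : 0 < gramDet a b c) (h : cos α = (cos a - cos c * cos b) / (sin c * sin b)) :
    0 < sin α := by
  rw [sin_eq_of_first_cosine_rule hα hb hc h]
  exact div_pos (sqrt_pos.2 hΔ) (mul_pos hc hb)

lemma cos_eq_of_first_cosine_rule (ha : 0 < sin a) (hb : 0 < sin b) (hc : 0 < sin c)
    (hβ : β ∈ Icc 0 π) (hγ : γ ∈ Icc 0 π) (hΔ : 0 < gramDet a b c)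
    (hcα : cos α = (cos a - cos c * cos b) / (sin c * sin b))
    (hcβ : cos β = (cos b - cos a * cos c) / (sin a * sin c))
    (hcγ : cos γ = (cos c - cos b * cos a) / (sin b * sin a)) :
    cos a = (cos α + cos β * cos γ) / (sin β * sin γ) := by
  have hsβ := sin_eq_of_first_cosine_rule hβ hc ha hcβ
  have hsγ := sin_eq_of_first_cosine_rule hγ ha hb hcγ
  rw [← gramDet_rotate] at hsβ
  rw [← gramDet_rotate, ← gramDet_rotate] at hsγ
  have hΔsq : √(gramDet a b c) ^ 2 = gramDet a b c := sq_sqrt hΔ.le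
  rw [hcα, hcβ, hcγ, hsβ, hsγ]
  field_simp
  rw [hΔsq, gramDet]
  linear_combination (cos b * cos c - cos a) * sin_sq_add_cos_sq a

end SphericalTrigonometry

lemma cos_add_cos_add_eq (α β γ : ℝ) :
    cos α + cos (β + γ) = 2 * sin ((α + β + γ - π) / 2) * sin ((α + β + γ - π) / 2 - α) := by
  have h := cos_sub_cos α (β + γ - π)
  rw [cos_sub_pi, show (α + (β + γ - π)) / 2 = (α + β + γ - π) / 2 by ring,
    show (α - (β + γ - π)) / 2 = -((α + β + γ - π) / 2 - α) by ring, sin_neg] at h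
  linarith

lemma cos_add_cos_mul_cos_div_eq {α β γ : ℝ} (h : sin β * sin γ ≠ 0) :
    (cos α + cos β * cos γ) / (sin β * sin γ) =
      1 + 2 * sin ((α + β + γ - π) / 2) * sin ((α + β + γ - π) / 2 - α) / (sin β * sin γ) := by
  rw [← cos_add_cos_add_eq, cos_add, one_add_div h]
  congr 1
  ring

theorem second_cosine_rule_of_first {a b c α β γ : ℝ} (ha : a ∈ Icc 0 π) (hb : b ∈ Icc 0 π)
    (hc : c ∈ Icc 0 π) (hβ : β ∈ Icc 0 π) (hγ : γ ∈ Icc 0 π) (hΔ : 0 < gramDet a b c)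
    (hcα : cos α = (cos a - cos c * cos b) / (sin c * sin b))
    (hcβ : cos β = (cos b - cos a * cos c) / (sin a * sin c))
    (hcγ : cos γ = (cos c - cos b * cos a) / (sin b * sin a)) :
    cos a = (cos α + cos β * cos γ) / (sin β * sin γ) ∧
    cos a = 1 + 2 * sin ((α + β + γ - π) / 2) * sin ((α + β + γ - π) / 2 - α) /
      (sin β * sin γ) := by
  have hΔ' : 0 < gramDet b c a := gramDet_rotate a b c ▸ hΔ
  have hΔ'' : 0 < gramDet c a b := gramDet_rotate b c a ▸ hΔ'
  have hsa : 0 < sin a := sin_pos_of_gramDet_pos ha hΔ''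
  have hsb : 0 < sin b := sin_pos_of_gramDet_pos hb hΔ
  have hsc : 0 < sin c := sin_pos_of_gramDet_pos hc hΔ'
  have hsβ : 0 < sin β := sin_pos_of_first_cosine_rule hβ hsc hsa hΔ' hcβ
  have hsγ : 0 < sin γ := sin_pos_of_first_cosine_rule hγ hsa hsb hΔ'' hcγ
  have hcos := cos_eq_of_first_cosine_rule hsa hsb hsc hβ hγ hΔ hcα hcβ hcγ
  exact ⟨hcos, hcos.trans (cos_add_cos_mul_cos_div_eq (mul_pos hsβ hsγ).ne')⟩

/-- Second spherical cosine rule: for a spherical triangle with angles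
`α, β, γ` and sides `a, b, c`, `cos a = (cos α + cos β cos γ)/(sin β sin γ)`
and `cos a = 1 + 2 sin ε sin(ε−α)/(sin β sin γ)` where `2ε = α + β + γ − π`. -/
theorem second_spherical_cosine_rule (A B C : Fin 3 → ℝ)
    (hA : norm3 A = 1) (hB : norm3 B = 1) (hC : norm3 C = 1)
    (hS : det3 A B C ≠ 0)
    (a b c α β γ : ℝ)
    (ha : a = Real.arccos (dot3 B C)) (hb : b = Real.arccos (dot3 C A))
    (hc : c = Real.arccos (dot3 A B))
    (hα : α = Real.arccos (dot3 (cross3 A B) (cross3 A C) /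
      (norm3 (cross3 A B) * norm3 (cross3 A C))))
    (hβ : β = Real.arccos (dot3 (cross3 B C) (cross3 B A) /
      (norm3 (cross3 B C) * norm3 (cross3 B A))))
    (hγ : γ = Real.arccos (dot3 (cross3 C A) (cross3 C B) /
      (norm3 (cross3 C A) * norm3 (cross3 C B)))) :
    Real.cos a = (Real.cos α + Real.cos β * Real.cos γ) / (Real.sin β * Real.sin γ) ∧
    Real.cos a = 1 + 2 * Real.sin ((α + β + γ - Real.pi) / 2)
      * Real.sin ((α + β + γ - Real.pi) / 2 - α) / (Real.sin β * Real.sin γ) := by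
  have arccos_mem (t : ℝ) : arccos t ∈ Icc 0 π := ⟨arccos_nonneg t, arccos_le_pi t⟩
  have hΔ : 0 < gramDet a b c := by
    rw [ha, hb, hc, gramDet_arccos_dot3 hA hB hC]
    positivity
  refine second_cosine_rule_of_first (ha ▸ arccos_mem _) (hb ▸ arccos_mem _) (hc ▸ arccos_mem _)
    (hβ ▸ arccos_mem _) (hγ ▸ arccos_mem _) hΔ ?_ ?_ ?_
  · rw [hα, ha, hb, hc]; exact cos_angle_eq hA hB hC
  · rw [hβ, ha, hb, hc]; exact cos_angle_eq hB hC hA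
  · rw [hγ, ha, hb, hc]; exact cos_angle_eq hC hA hB
end
end

section
/- In barycentric coordinates with respect to a spherical triangle with Gram matrix 𝔗, the vertex A' of the dual triangle (the pole of line B∨C) has coordinates [sin²a : −S_C : −S_B], where S_B = cos b − cos c cos a and S_C = cos c − cos a cos b. That is, the vector sin²a·A° − S_C·B° − S_B·C° is a scalar multiple of B°×C°. -/
noncomputable section

lemma dot3_self_eq_one {p : Fin 3 → ℝ} (h : norm3 p = 1) : dot3 p p = 1 := by
  have h0 : (0:ℝ) ≤ dot3 p p := by
    unfold dot3
    nlinarith [mul_self_nonneg (p 0), mul_self_nonneg (p 1), mul_self_nonneg (p 2)]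
  have := congrArg (fun x => x ^ 2) h
  simpa [norm3, Real.sq_sqrt h0] using this

/-- The vertex `A'` of the dual triangle (the pole of line `B∨C`) has
barycentric coordinates `[sin²a : −S_C : −S_B]`: the vector
`sin²a·A° − S_C·B° − S_B·C°` is a scalar multiple of `B°×C°`. -/
theorem dual_vertex_barycentric (A B C : Fin 3 → ℝ)
    (hA : norm3 A = 1) (hB : norm3 B = 1) (hC : norm3 C = 1)
    (hS : det3 A B C ≠ 0) :
    ∃ k : ℝ,
      (Real.sin (Real.arccos (dot3 B C)) ^ 2) • A
        - (dot3 A B - dot3 B C * dot3 C A) • B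
        - (dot3 C A - dot3 A B * dot3 B C) • C
      = k • cross3 B C := by
  have hBB := dot3_self_eq_one hB
  have hCC := dot3_self_eq_one hC
  have habs : |dot3 B C| ≤ 1 := by
    rw [abs_le]
    constructor <;>
    · unfold dot3 at *
      nlinarith [hBB, hCC, sq_nonneg (B 0 * C 1 - B 1 * C 0), sq_nonneg (B 1 * C 2 - B 2 * C 1),
        sq_nonneg (B 2 * C 0 - B 0 * C 2), sq_nonneg (B 0 + C 0), sq_nonneg (B 1 + C 1),
        sq_nonneg (B 2 + C 2), sq_nonneg (B 0 - C 0), sq_nonneg (B 1 - C 1), sq_nonneg (B 2 - C 2)]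
  have hsin : Real.sin (Real.arccos (dot3 B C)) ^ 2 = 1 - (dot3 B C) ^ 2 := by
    rw [Real.sin_arccos, Real.sq_sqrt]
    nlinarith [abs_le.mp habs]
  refine ⟨det3 A B C, ?_⟩
  rw [hsin]
  unfold dot3 at hBB hCC
  funext i
  have h2 : (⟨2, by norm_num⟩ : Fin 3) = 2 := rfl
  fin_cases i
  · simp only [h2, Pi.sub_apply, Pi.smul_apply, smul_eq_mul, det3, dot3, cross3,
      Matrix.cons_val_zero, Matrix.cons_val_one, Matrix.head_cons,
      Matrix.cons_val_two, Matrix.tail_cons, Fin.isValue, Fin.zero_eta]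
    linear_combination ((C 0 * A 0 + C 1 * A 1 + C 2 * A 2) * C 0
        - (C 0 * C 0 + C 1 * C 1 + C 2 * C 2) * A 0) * hBB
      + ((A 0 * B 0 + A 1 * B 1 + A 2 * B 2) * B 0 - A 0) * hCC
  · simp only [h2, Pi.sub_apply, Pi.smul_apply, smul_eq_mul, det3, dot3, cross3,
      Matrix.cons_val_zero, Matrix.cons_val_one, Matrix.head_cons,
      Matrix.cons_val_two, Matrix.tail_cons, Fin.isValue, Fin.mk_one]
    linear_combination ((C 0 * A 0 + C 1 * A 1 + C 2 * A 2) * C 1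
        - (C 0 * C 0 + C 1 * C 1 + C 2 * C 2) * A 1) * hBB
      + ((A 0 * B 0 + A 1 * B 1 + A 2 * B 2) * B 1 - A 1) * hCC
  · simp only [h2, Pi.sub_apply, Pi.smul_apply, smul_eq_mul, det3, dot3, cross3,
      Matrix.cons_val_zero, Matrix.cons_val_one, Matrix.head_cons,
      Matrix.cons_val_two, Matrix.tail_cons, Fin.isValue]
    linear_combination ((C 0 * A 0 + C 1 * A 1 + C 2 * A 2) * C 2
        - (C 0 * C 0 + C 1 * C 1 + C 2 * C 2) * A 2) * hBB
      + ((A 0 * B 0 + A 1 * B 1 + A 2 * B 2) * B 2 - A 2) * hCC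
end
end

section
/- The incenter lies on the internal angle bisectors: with unit vectors A°, B°, C° linearly independent, set i := ‖B°×C°‖A° + ‖C°×A°‖B° + ‖A°×B°‖C° (representing the incenter I = [sin a : sin b : sin c]) and w_A := (A°×B°)/‖A°×B°‖ + (A°×C°)/‖A°×C°‖ (representing the dual of the internal bisector at A). Then i ⋅ w_A = 0, i.e. I lies on the bisector of the angle at A. -/
noncomputable section

lemma norm3_ne_zero_of_dot_ne_zero (u w : Fin 3 → ℝ) (h : dot3 u w ≠ 0) :
    norm3 u ≠ 0 := by
  intro h0
  have hnn : 0 ≤ dot3 u u := by simp [dot3]; nlinarith [sq_nonneg (u 0), sq_nonneg (u 1), sq_nonneg (u 2)]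
  have hdz : dot3 u u = 0 := by
    have := (Real.sqrt_eq_zero hnn).mp h0
    exact this
  have h0' : u 0 = 0 := by simp [dot3] at hdz; nlinarith [sq_nonneg (u 1), sq_nonneg (u 2)]
  have h1' : u 1 = 0 := by simp [dot3] at hdz; nlinarith [sq_nonneg (u 0), sq_nonneg (u 2)]
  have h2' : u 2 = 0 := by simp [dot3] at hdz; nlinarith [sq_nonneg (u 0), sq_nonneg (u 1)]
  apply h
  simp [dot3, h0', h1', h2']

/-- The incenter `I = [sin a : sin b : sin c]` lies on the internal bisector of
the angle at `A`: with `i` representing `I` and `w_A` the dual of the bisector,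
`i ⋅ w_A = 0`. -/
theorem incenter_on_bisector (A B C : Fin 3 → ℝ)
    (hA : norm3 A = 1) (hB : norm3 B = 1) (hC : norm3 C = 1)
    (hS : det3 A B C ≠ 0) :
    dot3 (norm3 (cross3 B C) • A + norm3 (cross3 C A) • B + norm3 (cross3 A B) • C)
      ((norm3 (cross3 A B))⁻¹ • cross3 A B + (norm3 (cross3 A C))⁻¹ • cross3 A C)
      = 0 := by
  have hsb : norm3 (cross3 C A) = norm3 (cross3 A C) := by
    simp only [norm3, dot3, cross3, Matrix.cons_val_zero, Matrix.cons_val_one,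
      Matrix.head_cons, Matrix.cons_val_two, Matrix.tail_cons]
    ring_nf
  have h1 : dot3 (cross3 A B) C ≠ 0 := by
    intro h; apply hS
    unfold det3 dot3 cross3 at *
    simp at h ⊢
    linarith [h]
  have h2 : dot3 (cross3 A C) B ≠ 0 := by
    intro h; apply hS
    unfold det3 dot3 cross3 at *
    simp at h ⊢
    linarith [h]
  have hAB0 : norm3 (cross3 A B) ≠ 0 := norm3_ne_zero_of_dot_ne_zero _ _ h1
  have hAC0 : norm3 (cross3 A C) ≠ 0 := norm3_ne_zero_of_dot_ne_zero _ _ h2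
  rw [hsb]
  set nAB := norm3 (cross3 A B) with hnAB
  set nAC := norm3 (cross3 A C) with hnAC
  set sa := norm3 (cross3 B C) with hsa
  simp only [dot3, cross3, Pi.add_apply, Pi.smul_apply, smul_eq_mul,
    Matrix.cons_val_zero, Matrix.cons_val_one, Matrix.head_cons,
    Matrix.cons_val_two, Matrix.tail_cons]
  field_simp
  ring
end
end

section
/- The traces of the centroid are the pedals of the point O = G^{τδ}: in barycentric coordinates with respect to a spherical triangle with side lengths a, b, c, the point O = [(1−cos a)(1+cos a−cos b−cos c) : (1−cos b)(1−cos a+cos b−cos c) : (1−cos c)(1−cos a−cos b+cos c)] has pedal on the sideline B∨C equal to the midpoint trace [0:1:1] of the centroid G = [1:1:1]; hence O is equidistant from B and C (and by symmetry from A), so O is the circumcenter of the triangle. -/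
noncomputable section

/-- The point `O = G^{τδ}` has pedal on the sideline `B∨C` equal to the
midpoint trace `[0:1:1]` of the centroid, and `O` is `∗`-equidistant from the
vertices `A`, `B`, `C`: it is the circumcenter. -/
theorem circumcenter_pedal (a b c : ℝ)
    (ca cb cc : ℝ) (hca : ca = Real.cos a) (hcb : cb = Real.cos b)
    (hcc : cc = Real.cos c)
    (o : Fin 3 → ℝ)
    (ho : o = ![(1 - ca) * (1 + ca - cb - cc), (1 - cb) * (1 - ca + cb - cc),
                (1 - cc) * (1 - ca - cb + cc)]) :
    -- the pedal of O on B∨C, `[0 : o₁S_C + o₂ sin²a : o₁S_B + o₃ sin²a]`,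
    -- has equal second and third coordinates, i.e. it is `[0:1:1]`
    o 0 * (cc - ca * cb) + o 1 * (1 - ca ^ 2)
      = o 0 * (cb - cc * ca) + o 2 * (1 - ca ^ 2) ∧
    -- O is ∗-equidistant from the vertices
    star3 ca cb cc o ![1, 0, 0] = star3 ca cb cc o ![0, 1, 0] ∧
    star3 ca cb cc o ![0, 1, 0] = star3 ca cb cc o ![0, 0, 1] := by
  subst ho
  refine ⟨?_, ?_, ?_⟩ <;> simp [star3, Matrix.cons_val_zero, Matrix.cons_val_one] <;> ring
end
end

section
/- The incenter is equidistant from the sidelines: for a spherical triangle with sides a, b, c, the cosine of the distance from I = [sin a : sin b : sin c] to its pedal on the line B∨C equals (2 sin s)/κ, where s = (a+b+c)/2 and κ = ‖(sin a, sin b, sin c)‖_∗ = √(sin²a + sin²b + sin²c + 2(cos a sin b sin c + cos b sin c sin a + cos c sin a sin b)). By symmetry the same value is obtained for the other two sidelines, so the inradius is r = arccos((2 sin s)/κ). -/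
noncomputable section

private lemma sin_add_sin' (u v : ℝ) :
    Real.sin u + Real.sin v = 2 * Real.sin ((u + v) / 2) * Real.cos ((u - v) / 2) := by
  have h1 := Real.sin_add ((u + v) / 2) ((u - v) / 2)
  have h2 := Real.sin_sub ((u + v) / 2) ((u - v) / 2)
  have e1 : (u + v) / 2 + (u - v) / 2 = u := by ring
  have e2 : (u + v) / 2 - (u - v) / 2 = v := by ring
  rw [e1] at h1; rw [e2] at h2
  linear_combination h1 + h2

set_option maxHeartbeats 1000000 in
/-- The incenter `I = [sin a : sin b : sin c]` of a spherical triangle is at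
`∗`-distance with cosine `(2 sin s)/κ` from its pedal on the sideline `B∨C`,
where `s` is the semiperimeter and `κ = ‖(sin a, sin b, sin c)‖_∗`; so the
inradius is `arccos((2 sin s)/κ)`. -/
theorem inradius_formula (a b c : ℝ)
    (ha : 0 < a) (hb : 0 < b) (hc : 0 < c)
    (ha' : a < Real.pi) (hb' : b < Real.pi) (hc' : c < Real.pi)
    (htri1 : a < b + c) (htri2 : b < c + a) (htri3 : c < a + b)
    (hper : a + b + c < 2 * Real.pi)
    (i p : Fin 3 → ℝ)
    (hi : i = ![Real.sin a, Real.sin b, Real.sin c])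
    (hp : p = ![0,
      Real.cos a * Real.cos b - Real.sin a * Real.sin b - Real.cos c,
      Real.cos c * Real.cos a - Real.sin c * Real.sin a - Real.cos b]) :
    |star3 (Real.cos a) (Real.cos b) (Real.cos c) i p| /
      (Real.sqrt (star3 (Real.cos a) (Real.cos b) (Real.cos c) i i) *
       Real.sqrt (star3 (Real.cos a) (Real.cos b) (Real.cos c) p p)) =
    2 * Real.sin ((a + b + c) / 2) /
      Real.sqrt (star3 (Real.cos a) (Real.cos b) (Real.cos c) i i) := by
  subst hi hp
  set S := Real.sin ((a + b + c) / 2) with hS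
  set sy := Real.sin ((a + c - b) / 2) with hsy
  set sz := Real.sin ((a + b - c) / 2) with hsz
  set cy := Real.cos ((a + c - b) / 2) with hcy
  set cz := Real.cos ((a + b - c) / 2) with hcz
  -- pedal entries
  have hp1 : Real.cos a * Real.cos b - Real.sin a * Real.sin b - Real.cos c
      = -2 * S * sz := by
    have h := Real.cos_sub_cos (a + b) c
    rw [show ((a+b) + c)/2 = (a+b+c)/2 by ring, show ((a+b) - c)/2 = (a+b-c)/2 by ring] at h
    linear_combination h - Real.cos_add a b
  have hp2 : Real.cos c * Real.cos a - Real.sin c * Real.sin a - Real.cos b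
      = -2 * S * sy := by
    have h := Real.cos_sub_cos (c + a) b
    rw [show ((c+a) + b)/2 = (a+b+c)/2 by ring, show ((c+a) - b)/2 = (a+c-b)/2 by ring] at h
    linear_combination h - Real.cos_add c a
  -- sum-to-product facts
  have h1 : Real.sin b + Real.sin (a + c) = 2 * S * cy := by
    have h := sin_add_sin' b (a + c)
    rw [show (b + (a+c))/2 = (a+b+c)/2 by ring, show (b - (a+c))/2 = -((a+c-b)/2) by ring,
      Real.cos_neg] at h
    linear_combination h
  have h2 : Real.sin c + Real.sin (a + b) = 2 * S * cz := by
    have h := sin_add_sin' c (a + b)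
    rw [show (c + (a+b))/2 = (a+b+c)/2 by ring, show (c - (a+b))/2 = -((a+b-c)/2) by ring,
      Real.cos_neg] at h
    linear_combination h
  have h3 : Real.sin (a + c) = Real.sin a * Real.cos c + Real.cos a * Real.sin c :=
    Real.sin_add a c
  have h4 : Real.sin (a + b) = Real.sin a * Real.cos b + Real.cos a * Real.sin b :=
    Real.sin_add a b
  have h5 : Real.sin a = sy * cz + cy * sz := by
    rw [hsy, hsz, hcy, hcz, ← Real.sin_add, show (a+c-b)/2 + (a+b-c)/2 = a by ring]
  have hca : Real.cos a = cy * cz - sy * sz := by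
    rw [hsy, hsz, hcy, hcz, ← Real.cos_add, show (a+c-b)/2 + (a+b-c)/2 = a by ring]
  have py : sy ^ 2 + cy ^ 2 = 1 := Real.sin_sq_add_cos_sq _
  have pz : sz ^ 2 + cz ^ 2 = 1 := Real.sin_sq_add_cos_sq _
  -- positivity
  have hSpos : 0 < S := Real.sin_pos_of_pos_of_lt_pi (by linarith) (by linarith)
  have hsapos : 0 < Real.sin a := Real.sin_pos_of_pos_of_lt_pi ha ha'
  -- key evaluations
  have E1 : star3 (Real.cos a) (Real.cos b) (Real.cos c)
      ![Real.sin a, Real.sin b, Real.sin c]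
      ![0, Real.cos a * Real.cos b - Real.sin a * Real.sin b - Real.cos c,
        Real.cos c * Real.cos a - Real.sin c * Real.sin a - Real.cos b]
      = -(4 * S ^ 2 * Real.sin a) := by
    simp only [star3, Matrix.cons_val_zero, Matrix.cons_val_one, Matrix.head_cons,
      Matrix.cons_val_two, Matrix.tail_cons]
    rw [hp1, hp2]
    linear_combination (-2*S*sz) * h1 + (-2*S*sy) * h2 + (2*S*sz) * h3 + (2*S*sy) * h4
      + (4*S^2) * h5
  have E3 : star3 (Real.cos a) (Real.cos b) (Real.cos c)
      ![0, Real.cos a * Real.cos b - Real.sin a * Real.sin b - Real.cos c,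
        Real.cos c * Real.cos a - Real.sin c * Real.sin a - Real.cos b]
      ![0, Real.cos a * Real.cos b - Real.sin a * Real.sin b - Real.cos c,
        Real.cos c * Real.cos a - Real.sin c * Real.sin a - Real.cos b]
      = (2 * S * Real.sin a) ^ 2 := by
    simp only [star3, Matrix.cons_val_zero, Matrix.cons_val_one, Matrix.head_cons,
      Matrix.cons_val_two, Matrix.tail_cons]
    rw [hp1, hp2, hca, h5]
    linear_combination (-4*S^2*sz^2) * py + (-4*S^2*sy^2) * pz
  have hsqrt : Real.sqrt (star3 (Real.cos a) (Real.cos b) (Real.cos c)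
      ![0, Real.cos a * Real.cos b - Real.sin a * Real.sin b - Real.cos c,
        Real.cos c * Real.cos a - Real.sin c * Real.sin a - Real.cos b]
      ![0, Real.cos a * Real.cos b - Real.sin a * Real.sin b - Real.cos c,
        Real.cos c * Real.cos a - Real.sin c * Real.sin a - Real.cos b])
      = 2 * S * Real.sin a := by
    rw [E3, Real.sqrt_sq (by positivity)]
  rw [E1, hsqrt, abs_neg, abs_of_pos (by positivity),
    show 4 * S ^ 2 * Real.sin a = (2 * S) * (2 * S * Real.sin a) by ring]
  exact mul_div_mul_right _ _ (by positivity)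
end
end

section
/- The triplex points lie on the line G∨O: in barycentric coordinates for a spherical triangle with sides a, b, c (cos a, cos b, cos c pairwise distinct), the point T_A = [1 : (1−cos b)/(cos a−cos c) : (1−cos c)/(cos a−cos b)] satisfies the equation of the line G∨O, namely (1+c_a−c_b−c_c)(c_b−c_c)x₁ + (1−c_a+c_b−c_c)(c_c−c_a)x₂ + (1−c_a−c_b+c_c)(c_a−c_b)x₃ = 0 (and similarly for T_B, T_C by cyclic permutation). -/
noncomputable section

/-- The triplex points `T_A, T_B, T_C` lie on the line `G∨O`. -/
theorem triplex_on_GO (ca cb cc : ℝ)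
    (hab : ca ≠ cb) (hbc : cb ≠ cc) (hca : cc ≠ ca) :
    ((1 + ca - cb - cc) * (cb - cc) * 1
      + (1 - ca + cb - cc) * (cc - ca) * ((1 - cb) / (ca - cc))
      + (1 - ca - cb + cc) * (ca - cb) * ((1 - cc) / (ca - cb)) = 0) ∧
    ((1 + ca - cb - cc) * (cb - cc) * ((1 - ca) / (cb - cc))
      + (1 - ca + cb - cc) * (cc - ca) * 1
      + (1 - ca - cb + cc) * (ca - cb) * ((1 - cc) / (cb - ca)) = 0) ∧
    ((1 + ca - cb - cc) * (cb - cc) * ((1 - ca) / (cc - cb))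
      + (1 - ca + cb - cc) * (cc - ca) * ((1 - cb) / (cc - ca))
      + (1 - ca - cb + cc) * (ca - cb) * 1 = 0) := by
  have h1 : ca - cb ≠ 0 := sub_ne_zero.mpr hab
  have h2 : cb - cc ≠ 0 := sub_ne_zero.mpr hbc
  have h3 : cc - ca ≠ 0 := sub_ne_zero.mpr hca
  have h4 : ca - cc ≠ 0 := sub_ne_zero.mpr hca.symm
  have h5 : cb - ca ≠ 0 := sub_ne_zero.mpr hab.symm
  have h6 : cc - cb ≠ 0 := sub_ne_zero.mpr hbc.symm
  refine ⟨?_, ?_, ?_⟩ <;> field_simp <;> ring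
end
end
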